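/- Let m ≤ n be non-negative integers, let (C, ⊗, 1) be an additive symmetric monoidal category with finite biproducts, let l be a positive divisor of n, let i be an integer coprime to l, and let b be an object of C with b^{⊗l} ≅ 1. Then there is an isomorphism (n choose m)_{b^{⊗i}} ≅ (n choose m)_b in C, i.e. the evaluation of the Gaussian polynomial (n choose m)_t at the object b^{⊗i} is isomorphic to its evaluation at b. -/

import Mathlib

open CategoryTheory CategoryTheory.Limits CategoryTheory.MonoidalCategory Polynomial Finset

universe v u

variable {C : Type u} [Category.{v} C] [MonoidalCategory C] [Preadditive C]
  [HasFiniteBiproducts C]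

/-- The `j`-fold tensor power `b^{⊗j}` of an object `b`. -/
def tensorPow (b : C) : ℕ → C
  | 0 => 𝟙_ C
  | j + 1 => tensorPow b j ⊗ b

/-- The evaluation `p(b) = 𝟙^{⊕a₀} ⊕ b^{⊕a₁} ⊕ (b^{⊗2})^{⊕a₂} ⊕ ⋯` of a polynomial
`p = a₀ + a₁ t + ⋯ + aₙ tⁿ` with natural number coefficients at an object `b`. -/
noncomputable def evalPoly (p : Polynomial ℕ) (b : C) : C :=
  ⨁ fun i : Fin (p.natDegree + 1) => ⨁ fun _ : Fin (p.coeff i.1) => tensorPow b i.1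

/-!
Since `b^{⊗l} ≅ 𝟙`, the power `b^{⊗k}` depends only on `k mod l`, so both sides are direct sums of
the objects `b^{⊗r}`, `r ∈ ℤ/l`, with multiplicities `∑_{ik ≡ r} g_k` and `∑_{k ≡ r} g_k`. These
agree because `g(y) = g(y^i)` for the generator `y` of the group algebra `ℂ[ℤ/l]`, i.e. because
`X^l - 1 ∣ g - g(X^i)`. Since `X^l - 1` has simple roots, this reduces to `g(ζ) = g(ζ^i)` for every
root of unity `ζ` of order `d ∣ l`. Cancel the common factors `1 - X^d` from
`g · ∏ (1 - X^{j+1}) = ∏ (1 - X^{n-j})` and evaluate at `ζ`: the factors `1 - ζ^e` with `d ∤ e`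
match up under `j ↦ m - 1 - j`, and what remains expresses `g(ζ)` by a formula depending only on `d`.
-/

theorem Nat.card_filter_range_dvd (d m : ℕ) :
    #{j ∈ range m | d ∣ j} = #{j ∈ range m | d ∣ j + 1} + if d ∣ m then 0 else 1 := by
  induction m with
  | zero => simp
  | succ m ih =>
    rw [range_add_one, filter_insert, filter_insert]
    by_cases h : d ∣ m <;> by_cases h' : d ∣ m + 1 <;> simp [h, h', ih]

theorem AddMonoidAlgebra.coeff_aeval_single_one {R G : Type*} [CommSemiring R] [AddMonoid G]
    [DecidableEq G] (p : R[X]) (a r : G) :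
    (aeval (single a (1 : R)) p).coeff r =
      ∑ k ∈ range (p.natDegree + 1), if k • a = r then p.coeff k else 0 := by
  rw [aeval_eq_sum_range, coeff_sum, Finsupp.finsetSum_apply]
  refine sum_congr rfl fun k _ => ?_
  simp [single_pow, Finsupp.single_apply]

namespace Polynomial

section CommRing

variable {R : Type*} [CommRing R]

theorem prod_one_sub_X_pow_eq {ι : Type*} (s : Finset ι) (E : ι → ℕ) (d : ℕ) :
    ∏ j ∈ s, (1 - X ^ E j : R[X]) =
      (1 - X ^ d) ^ #{j ∈ s | d ∣ E j} *
        ((∏ j ∈ s with d ∣ E j, ∑ t ∈ range (E j / d), (X ^ d) ^ t) *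
          ∏ j ∈ s with ¬d ∣ E j, (1 - X ^ E j)) := by
  have hsplit : ∀ j ∈ s.filter (d ∣ E ·),
      (1 - X ^ E j : R[X]) = (1 - X ^ d) * ∑ t ∈ range (E j / d), (X ^ d) ^ t := by
    intro j hj
    rw [mul_neg_geom_sum, ← pow_mul, Nat.mul_div_cancel' (mem_filter.1 hj).2]
  rw [← prod_filter_mul_prod_filter_not s (d ∣ E ·), prod_congr rfl hsplit, prod_mul_distrib,
    prod_const, mul_assoc]

/-- Characterises the Gaussian polynomial `(n choose m)_t`, as `∏ (1 - X^{j+1})` is not a zero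
divisor. -/
def IsGaussianBinomial (n m : ℕ) (f : R[X]) : Prop :=
  f * ∏ j ∈ range m, (1 - X ^ (j + 1)) = ∏ j ∈ range m, (1 - X ^ (n - j))

theorem IsGaussianBinomial.map {S : Type*} [CommRing S] (φ : R →+* S) {n m : ℕ} {f : R[X]}
    (hf : IsGaussianBinomial n m f) : IsGaussianBinomial n m (f.map φ) := by
  simpa [IsGaussianBinomial, Polynomial.map_prod] using congrArg (Polynomial.map φ) hf

end CommRing

section Field

variable {K : Type*} [Field K] {ξ : K} {d : ℕ}

theorem eval_geom_sum_X_pow (hξ : ξ ^ d = 1) (q : ℕ) :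
    (∑ t ∈ range q, (X ^ d : K[X]) ^ t).eval ξ = q := by
  simp [eval_finsetSum, hξ]

theorem prod_filter_not_dvd_reflect (hξ : ξ ^ d = 1) {n m : ℕ} (hmn : m ≤ n) (hdn : d ∣ n - m) :
    ∏ j ∈ range m with ¬d ∣ n - j, (1 - ξ ^ (n - j)) =
      ∏ j ∈ range m with ¬d ∣ j + 1, (1 - ξ ^ (j + 1)) := by
  rw [prod_filter, prod_filter, ← prod_range_reflect]
  refine prod_congr rfl fun j hj => ?_
  have hj : n - (m - 1 - j) = (n - m) + (j + 1) := by
    have := mem_range.1 hj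
    omega
  obtain ⟨c, hc⟩ := hdn
  rw [hj, pow_add, hc, pow_mul, hξ, one_pow, one_mul, ← hc]
  simp only [Nat.dvd_add_right ⟨c, hc⟩]

namespace IsGaussianBinomial

variable {f : K[X]} {n m : ℕ}

theorem eval_mul_prod_eq (hf : IsGaussianBinomial n m f) (hξ : IsPrimitiveRoot ξ d) (hd : 0 < d)
    (hdn : d ∣ n) (hmn : m ≤ n) :
    f.eval ξ * ∏ j ∈ range m with d ∣ j + 1, (((j + 1) / d : ℕ) : K) =
      if d ∣ m then ∏ j ∈ range m with d ∣ n - j, (((n - j) / d : ℕ) : K) else 0 := by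
  have hcount : #{j ∈ range m | d ∣ n - j} =
      #{j ∈ range m | d ∣ j + 1} + if d ∣ m then 0 else 1 := by
    rw [← Nat.card_filter_range_dvd]
    congr 1
    exact filter_congr fun j hj => Nat.dvd_sub_iff_right ((mem_range.1 hj).le.trans hmn) hdn
  rw [IsGaussianBinomial, prod_one_sub_X_pow_eq (range m) (fun j => j + 1) d,
    prod_one_sub_X_pow_eq (range m) (fun j => n - j) d, hcount, pow_add] at hf
  have hXd : (1 - X ^ d : K[X]) ≠ 0 := by
    intro h
    simpa [hd.ne'] using congrArg (eval 0) h
  have hcancel : f * ((∏ j ∈ range m with d ∣ j + 1, ∑ t ∈ range ((j + 1) / d), (X ^ d) ^ t) *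
        ∏ j ∈ range m with ¬d ∣ j + 1, (1 - X ^ (j + 1))) =
      (1 - X ^ d) ^ (if d ∣ m then 0 else 1) *
        ((∏ j ∈ range m with d ∣ n - j, ∑ t ∈ range ((n - j) / d), (X ^ d) ^ t) *
          ∏ j ∈ range m with ¬d ∣ n - j, (1 - X ^ (n - j))) :=
    mul_left_cancel₀ (pow_ne_zero #{j ∈ range m | d ∣ j + 1} hXd) (by linear_combination hf)
  have hev := congrArg (eval ξ) hcancel
  simp only [eval_mul, eval_pow, eval_sub, eval_one, eval_X, eval_prod,
    eval_geom_sum_X_pow hξ.pow_eq_one, hξ.pow_eq_one, sub_self] at hev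
  have hN : ∏ j ∈ range m with ¬d ∣ j + 1, (1 - ξ ^ (j + 1)) ≠ 0 := by
    refine prod_ne_zero_iff.2 fun j hj h => (mem_filter.1 hj).2 ?_
    exact (hξ.pow_eq_one_iff_dvd _).1 (sub_eq_zero.1 h).symm
  split_ifs at hev ⊢ with hdm
  · rw [prod_filter_not_dvd_reflect hξ.pow_eq_one hmn (Nat.dvd_sub hdn hdm)] at hev
    exact mul_right_cancel₀ hN (by linear_combination hev)
  · exact (mul_eq_zero.1 (by linear_combination hev)).resolve_right hN

theorem eval_eq_of_isPrimitiveRoot [CharZero K] (hf : IsGaussianBinomial n m f) {ξ' : K}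
    (hξ : IsPrimitiveRoot ξ d) (hξ' : IsPrimitiveRoot ξ' d) (hd : 0 < d) (hdn : d ∣ n)
    (hmn : m ≤ n) : f.eval ξ = f.eval ξ' := by
  have hA : ∏ j ∈ range m with d ∣ j + 1, (((j + 1) / d : ℕ) : K) ≠ 0 := by
    refine prod_ne_zero_iff.2 fun j hj => Nat.cast_ne_zero.2 (Nat.div_pos ?_ hd).ne'
    exact Nat.le_of_dvd j.succ_pos (mem_filter.1 hj).2
  exact mul_right_cancel₀ hA <|
    (hf.eval_mul_prod_eq hξ hd hdn hmn).trans (hf.eval_mul_prod_eq hξ' hd hdn hmn).symm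

end IsGaussianBinomial

end Field

namespace IsGaussianBinomial

variable {n m l i : ℕ}

theorem X_pow_sub_one_dvd_sub_comp {f : ℂ[X]} (hf : IsGaussianBinomial n m f) (hmn : m ≤ n)
    (hl : 0 < l) (hln : l ∣ n) (hi : i.Coprime l) : X ^ l - 1 ∣ f - f.comp (X ^ i) := by
  rw [X_pow_sub_one_eq_prod hl (Complex.isPrimitiveRoot_exp l hl.ne')]
  refine prod_dvd_of_coprime ((pairwise_coprime_X_sub_C Function.injective_id).set_pairwise _)
    fun ζ hζ => dvd_iff_isRoot.2 ?_
  have hdl : orderOf ζ ∣ l := orderOf_dvd_of_pow_eq_one ((mem_nthRootsFinset hl 1).1 hζ)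
  have hζ := IsPrimitiveRoot.orderOf ζ
  rw [IsRoot, eval_sub, eval_comp, eval_pow, eval_X, sub_eq_zero]
  exact hf.eval_eq_of_isPrimitiveRoot hζ (hζ.pow_of_coprime i (hi.coprime_dvd_right hdl))
    (Nat.pos_of_dvd_of_pos hdl hl) (hdl.trans hln) hmn

theorem sum_coeff_residue_mul_eq [NeZero l] {g : ℕ[X]}
    (hg : IsGaussianBinomial n m (g.map (Nat.castRingHom ℤ))) (hmn : m ≤ n) (hln : l ∣ n)
    (hi : i.Coprime l) (r : ZMod l) :
    ∑ k ∈ range (g.natDegree + 1), (if ((i * k : ℕ) : ZMod l) = r then g.coeff k else 0) =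
      ∑ k ∈ range (g.natDegree + 1), if (k : ZMod l) = r then g.coeff k else 0 := by
  have hgℂ := hg.map (Int.castRingHom ℂ)
  rw [Polynomial.map_map,
    Subsingleton.elim ((Int.castRingHom ℂ).comp (Nat.castRingHom ℤ)) (Nat.castRingHom ℂ)] at hgℂ
  obtain ⟨q, hq⟩ := hgℂ.X_pow_sub_one_dvd_sub_comp hmn (NeZero.pos l) hln hi
  set y : AddMonoidAlgebra ℂ (ZMod l) := AddMonoidAlgebra.single 1 1
  have hyl : aeval y (X ^ l - 1 : ℂ[X]) = 0 := by
    simp [y, AddMonoidAlgebra.single_pow, AddMonoidAlgebra.one_def]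
  have heq : aeval y (g.map (Nat.castRingHom ℂ)) =
      aeval (AddMonoidAlgebra.single (i : ZMod l) 1) (g.map (Nat.castRingHom ℂ)) := by
    have := congrArg (aeval y) hq
    rw [map_mul, hyl, zero_mul, map_sub, sub_eq_zero, aeval_comp] at this
    simpa [y, AddMonoidAlgebra.single_pow] using this
  have hcoeff := congrArg (fun x => x.coeff r) heq
  simp only [y, AddMonoidAlgebra.coeff_aeval_single_one, coeff_map, natDegree_map_eq_of_injective
    (Nat.castRingHom ℂ).injective_nat, nsmul_eq_mul, mul_one, eq_natCast, mul_comm] at hcoeff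
  exact_mod_cast hcoeff.symm

end IsGaussianBinomial

end Polynomial

namespace CategoryTheory.Limits

variable {D : Type*} [Category D] [HasZeroMorphisms D] [HasFiniteBiproducts D]

noncomputable def biproduct.isoOfCardFiberEq {S κ : Type*} [Fintype S] [DecidableEq κ]
    (Y : κ → D) (w₁ w₂ : S → κ)
    (h : ∀ r, Fintype.card {x // w₁ x = r} = Fintype.card {x // w₂ x = r}) :
    (⨁ fun x => Y (w₁ x)) ≅ ⨁ fun x => Y (w₂ x) :=
  biproduct.whiskerEquiv (Equiv.ofFiberEquiv fun r => Fintype.equivOfCardEq (h r))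
    fun x => eqToIso (congrArg Y (Equiv.ofFiberEquiv_map _ x))

end CategoryTheory.Limits

abbrev MonomialIndex (p : ℕ[X]) : Type := Σ k : Fin (p.natDegree + 1), Fin (p.coeff k)

theorem card_monomialIndex_fiber {κ : Type*} [DecidableEq κ] (p : ℕ[X]) (v : ℕ → κ) (r : κ) :
    Fintype.card {x : MonomialIndex p // v x.1 = r} =
      ∑ k ∈ range (p.natDegree + 1), if v k = r then p.coeff k else 0 := by
  rw [Fintype.card_subtype, card_filter, Fintype.sum_sigma, ← Fin.sum_univ_eq_sum_range]
  simp [apply_ite]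

noncomputable def evalPolyIsoBiproduct (p : ℕ[X]) (c : C) :
    evalPoly p c ≅ ⨁ fun x : MonomialIndex p => tensorPow c x.1 :=
  biproductBiproductIso _ _

noncomputable def tensorPowAddIso (b : C) (a : ℕ) :
    (c : ℕ) → (tensorPow b (a + c) ≅ tensorPow b a ⊗ tensorPow b c)
  | 0 => (ρ_ (tensorPow b a)).symm
  | c + 1 => whiskerRightIso (tensorPowAddIso b a c) b ≪≫ α_ _ _ _

noncomputable def tensorPowTensorPowIso (b : C) (i : ℕ) :
    (k : ℕ) → (tensorPow (tensorPow b i) k ≅ tensorPow b (i * k))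
  | 0 => Iso.refl _
  | k + 1 => whiskerRightIso (tensorPowTensorPowIso b i k) (tensorPow b i) ≪≫
      (tensorPowAddIso b (i * k) i).symm ≪≫ eqToIso (congrArg (tensorPow b) (Nat.mul_succ i k).symm)

noncomputable def tensorPowMulIsoUnit {b : C} {l : ℕ} (e : tensorPow b l ≅ 𝟙_ C) :
    (t : ℕ) → (tensorPow b (l * t) ≅ 𝟙_ C)
  | 0 => Iso.refl _
  | t + 1 => eqToIso (congrArg (tensorPow b) (Nat.mul_succ l t)) ≪≫
      tensorPowAddIso b (l * t) l ≪≫ (tensorPowMulIsoUnit e t ⊗ᵢ e) ≪≫ λ_ _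

noncomputable def tensorPowModIso {b : C} {l : ℕ} (e : tensorPow b l ≅ 𝟙_ C) (k : ℕ) :
    tensorPow b k ≅ tensorPow b (k % l) :=
  eqToIso (congrArg (tensorPow b) (Nat.div_add_mod k l).symm) ≪≫
    tensorPowAddIso b (l * (k / l)) (k % l) ≪≫
    whiskerRightIso (tensorPowMulIsoUnit e (k / l)) _ ≪≫ λ_ _

theorem gaussian_evalPoly_iso_general
    (n m : ℕ) (hmn : m ≤ n)
    (l : ℕ) (hl : 0 < l) (hln : l ∣ n)
    (i : ℕ) (hi : Nat.Coprime i l)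
    (g : Polynomial ℕ)
    (hg : g.map (Nat.castRingHom ℤ) * ∏ j ∈ Finset.range m, ((1 : Polynomial ℤ) - X ^ (j + 1))
        = ∏ j ∈ Finset.range m, ((1 : Polynomial ℤ) - X ^ (n - j)))
    (b : C) (hb : Nonempty (tensorPow b l ≅ 𝟙_ C)) :
    Nonempty (evalPoly g (tensorPow b i) ≅ evalPoly g b) := by
  obtain ⟨e⟩ := hb
  have : NeZero l := ⟨hl.ne'⟩
  let Y (r : ZMod l) : C := tensorPow b r.val
  let toY (k : ℕ) : tensorPow b k ≅ Y k := tensorPowModIso e k ≪≫ eqToIso (by simp [Y])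
  have hfiber (r : ZMod l) :
      Fintype.card {x : MonomialIndex g // ((i * x.1 : ℕ) : ZMod l) = r} =
        Fintype.card {x : MonomialIndex g // (x.1 : ZMod l) = r} := by
    rw [card_monomialIndex_fiber g (fun k => ((i * k : ℕ) : ZMod l)),
      card_monomialIndex_fiber g (fun k => (k : ZMod l))]
    exact IsGaussianBinomial.sum_coeff_residue_mul_eq hg hmn hln hi r
  exact ⟨evalPolyIsoBiproduct g _ ≪≫
    biproduct.mapIso (fun x : MonomialIndex g => tensorPowTensorPowIso b i x.1 ≪≫ toY _) ≪≫
    biproduct.isoOfCardFiberEq Y _ _ hfiber ≪≫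
    (biproduct.mapIso fun x : MonomialIndex g => toY x.1).symm ≪≫ (evalPolyIsoBiproduct g b).symm⟩

/-- **Categorified cyclic sieving for Gaussian binomials.**
Let `m ≤ n`, let `l` be a positive divisor of `n`, let `i` be coprime to `l`, and let
`g ∈ ℕ[t]` be the Gaussian polynomial `(n choose m)_t`, characterised by
`g * (1-t)⋯(1-t^m) = (1-t^n)⋯(1-t^{n-m+1})` in `ℤ[t]`.  If `b` is an object of an additive
symmetric monoidal category with `b^{⊗l} ≅ 𝟙`, then `(n choose m)_{b^{⊗i}} ≅ (n choose m)_b`. -/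
theorem gaussian_evalPoly_iso
    [SymmetricCategory C] [MonoidalPreadditive C]
    (n m : ℕ) (hmn : m ≤ n)
    (l : ℕ) (hl : 0 < l) (hln : l ∣ n)
    (i : ℕ) (hi : Nat.Coprime i l)
    (g : Polynomial ℕ)
    (hg : g.map (Nat.castRingHom ℤ) * ∏ j ∈ Finset.range m, ((1 : Polynomial ℤ) - X ^ (j + 1))
        = ∏ j ∈ Finset.range m, ((1 : Polynomial ℤ) - X ^ (n - j)))
    (b : C) (hb : Nonempty (tensorPow b l ≅ 𝟙_ C)) :
    Nonempty (evalPoly g (tensorPow b i) ≅ evalPoly g b) :=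
  gaussian_evalPoly_iso_general n m hmn l hl hln i hi g hg b hb
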